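/- Both bounds p_{00} + p_{1(K−1)} − 1 ≤ φ ≤ 1 − p_{10} − p_{0(K−1)} are sharp: for any probability vector (p_{xy}) there exist joint distributions of (X, Y(0), Y(1)) consistent with the observed probabilities achieving the lower bound and the upper bound respectively for φ. -/

import Mathlib

/-!
Only the marginals of `(X, Y(X))` are pinned down, so the unobserved potential outcome may be
chosen freely. Setting it to the smallest outcome `0` for every unit with `X = 0` and to the
largest outcome `K - 1` for every unit with `X = 1` makes `Y(1) ≤ Y(0)` everywhere, with
equality exactly on the events `{X = 0, Y(0) = 0}` and `{X = 1, Y(1) = K - 1}`;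
hence `φ = -(1 - p₀₀ - p₁₍K₋₁₎)`. Exchanging the roles of `0` and `K - 1` gives the upper bound.
-/

open Finset

section Coupling

variable {ι : Type*} [Fintype ι]

theorem sum_sum_sum_eq_of_marginals (p : Fin 2 → ι → ℝ) (f : Fin 2 → ι → ι → ℝ)
    (h₀ : ∀ y, ∑ y₁, f 0 y y₁ = p 0 y) (h₁ : ∀ y, ∑ y₀, f 1 y₀ y = p 1 y) :
    ∑ x, ∑ y₀, ∑ y₁, f x y₀ y₁ = ∑ x, ∑ y, p x y := by
  simp only [Fin.sum_univ_two, h₀]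
  rw [Finset.sum_comm]
  simp only [h₁]

variable [DecidableEq ι]

def pinnedCoupling (p : Fin 2 → ι → ℝ) (a b : ι) : Fin 2 → ι → ι → ℝ :=
  ![fun y₀ y₁ => if y₁ = a then p 0 y₀ else 0,
    fun y₀ y₁ => if y₀ = b then p 1 y₁ else 0]

variable (p : Fin 2 → ι → ℝ) (a b : ι)

omit [Fintype ι] in
theorem pinnedCoupling_nonneg (hp : ∀ x y, 0 ≤ p x y) (x : Fin 2) (y₀ y₁ : ι) :
    0 ≤ pinnedCoupling p a b x y₀ y₁ := by
  fin_cases x <;> exact ite_nonneg (hp _ _) le_rfl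

theorem sum_pinnedCoupling_zero (y : ι) : ∑ y₁, pinnedCoupling p a b 0 y y₁ = p 0 y := by
  simp [pinnedCoupling]

theorem sum_pinnedCoupling_one (y : ι) : ∑ y₀, pinnedCoupling p a b 1 y₀ y = p 1 y := by
  simp [pinnedCoupling]

theorem sum_sum_sum_pinnedCoupling :
    ∑ x, ∑ y₀, ∑ y₁, pinnedCoupling p a b x y₀ y₁ = ∑ x, ∑ y, p x y :=
  sum_sum_sum_eq_of_marginals p _ (sum_pinnedCoupling_zero p a b) (sum_pinnedCoupling_one p a b)

theorem sum_pinnedCoupling_ite (R : ι → ι → Prop) [DecidableRel R] :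
    ∑ x, ∑ y₀, ∑ y₁, (if R y₀ y₁ then pinnedCoupling p a b x y₀ y₁ else 0)
      = ∑ y, (if R y a then p 0 y else 0) + ∑ y, (if R b y then p 1 y else 0) := by
  rw [Fin.sum_univ_two, Finset.sum_comm (γ := ι)
    (f := fun y₀ y₁ => if R y₀ y₁ then pinnedCoupling p a b 1 y₀ y₁ else 0)]
  simp only [pinnedCoupling, Matrix.cons_val_zero, Matrix.cons_val_one]
  simp_rw [← ite_and, and_comm (a := R _ _), ite_and, Fintype.sum_ite_eq']

end Coupling

section Extremes

variable {ι : Type*} [Fintype ι] [LinearOrder ι] (g : ι → ℝ) {t : ι}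

theorem sum_ite_lt_of_forall_le (ht : ∀ y, y ≤ t) :
    ∑ y, (if y < t then g y else 0) = ∑ y, g y - g t := by
  simp_rw [fun y => (ht y).lt_iff_ne, ← Finset.sum_filter, Finset.filter_ne',
    Finset.sum_erase_eq_sub (Finset.mem_univ t)]

theorem sum_ite_gt_of_forall_ge (ht : ∀ y, t ≤ y) :
    ∑ y, (if t < y then g y else 0) = ∑ y, g y - g t :=
  sum_ite_lt_of_forall_le (ι := ιᵒᵈ) g ht

end Extremes

/-- Sharpness of both bounds p_{00} + p_{1(K−1)} − 1 ≤ φ ≤ 1 − p_{10} − p_{0(K−1)}.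
`f x y0 y1` is the joint probability that `X = x, Y(0) = y0, Y(1) = y1`. -/
theorem stmt9 {K : ℕ} (hK : 2 ≤ K) (p : Fin 2 → Fin K → ℝ)
    (hp : ∀ x y, 0 ≤ p x y) (hsum : ∑ x, ∑ y, p x y = 1) :
    (∃ f : Fin 2 → Fin K → Fin K → ℝ,
      (∀ x y0 y1, 0 ≤ f x y0 y1) ∧
      (∑ x, ∑ y0, ∑ y1, f x y0 y1 = 1) ∧
      (∀ y : Fin K, ∑ y1, f 0 y y1 = p 0 y) ∧
      (∀ y : Fin K, ∑ y0, f 1 y0 y = p 1 y) ∧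
      (∑ x, ∑ y0, ∑ y1, (if y0 < y1 then f x y0 y1 else 0))
        - (∑ x, ∑ y0, ∑ y1, (if y1 < y0 then f x y0 y1 else 0))
        = p 0 ⟨0, by omega⟩ + p 1 ⟨K - 1, by omega⟩ - 1) ∧
    (∃ f : Fin 2 → Fin K → Fin K → ℝ,
      (∀ x y0 y1, 0 ≤ f x y0 y1) ∧
      (∑ x, ∑ y0, ∑ y1, f x y0 y1 = 1) ∧
      (∀ y : Fin K, ∑ y1, f 0 y y1 = p 0 y) ∧
      (∀ y : Fin K, ∑ y0, f 1 y0 y = p 1 y) ∧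
      (∑ x, ∑ y0, ∑ y1, (if y0 < y1 then f x y0 y1 else 0))
        - (∑ x, ∑ y0, ∑ y1, (if y1 < y0 then f x y0 y1 else 0))
        = 1 - p 1 ⟨0, by omega⟩ - p 0 ⟨K - 1, by omega⟩) := by
  set lo : Fin K := ⟨0, by omega⟩
  set hi : Fin K := ⟨K - 1, by omega⟩
  have hlo : ∀ y, lo ≤ y := fun y => Fin.le_iff_val_le_val.2 (Nat.zero_le _)
  have hhi : ∀ y, y ≤ hi := fun y => Fin.le_iff_val_le_val.2 (Nat.le_sub_one_of_lt y.isLt)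
  have hmass : ∑ y, p 0 y + ∑ y, p 1 y = 1 := by rwa [Fin.sum_univ_two] at hsum
  refine ⟨⟨pinnedCoupling p lo hi, pinnedCoupling_nonneg p lo hi hp,
      (sum_sum_sum_pinnedCoupling p lo hi).trans hsum, sum_pinnedCoupling_zero p lo hi,
      sum_pinnedCoupling_one p lo hi, ?_⟩,
    ⟨pinnedCoupling p hi lo, pinnedCoupling_nonneg p hi lo hp,
      (sum_sum_sum_pinnedCoupling p hi lo).trans hsum, sum_pinnedCoupling_zero p hi lo,
      sum_pinnedCoupling_one p hi lo, ?_⟩⟩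
  all_goals
    rw [sum_pinnedCoupling_ite, sum_pinnedCoupling_ite p _ _ fun y₀ y₁ => y₁ < y₀]
    simp only [fun y => (hlo y).not_gt, fun y => (hhi y).not_gt, if_false, sum_const_zero,
      sum_ite_lt_of_forall_le _ hhi, sum_ite_gt_of_forall_ge _ hlo]
    linarith
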